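/- arXiv:2412.16593 — 3 statements merged into one kernel-verified Lean document; each statement's English description precedes it below -/
import Mathlib

section
/- Let φ(z₁,z₂) = (2z₁z₂ - z₁ - z₂)/(2 - z₁ - z₂). Then for every ζ ∈ ℂ with |ζ| = 1 and every (z₁,z₂) ∈ 𝔻²: |φ(z₁,z₂) - ζ| ≥ (1/8)·(1-|z₁|)²·(1-|z₂|)². -/
/-!
By the Agler decomposition, `|p|² - |p̃|²` dominates `4 (1-|z₁|)² (1-|z₂|)²` on the bidisc, where
`p = 2 - z₁ - z₂` and `p̃ = 2z₁z₂ - z₁ - z₂`. Since `|p̃| ≤ |p| ≤ 4`, this gives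
`1 - |φ| = (|p|² - |p̃|²) / (|p| (|p| + |p̃|)) ≥ (1-|z₁|)² (1-|z₂|)² / 8`, and `|φ - ζ| ≥ 1 - |φ|`.
-/

open Complex

lemma agler_decomposition (z₁ z₂ : ℂ) :
    ‖2 - z₁ - z₂‖ ^ 2 - ‖2 * z₁ * z₂ - z₁ - z₂‖ ^ 2 =
      2 * (1 - ‖z₁‖ ^ 2) * ‖1 - z₂‖ ^ 2 + 2 * (1 - ‖z₂‖ ^ 2) * ‖1 - z₁‖ ^ 2 := by
  simp only [Complex.sq_norm, normSq_apply, sub_re, sub_im, mul_re, mul_im, one_re, one_im,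
    re_ofNat, im_ofNat]
  ring

lemma norm_sub_sub_le {E : Type*} [SeminormedAddCommGroup E] {a b c : E} :
    ‖a - b - c‖ ≤ ‖a‖ + ‖b‖ + ‖c‖ :=
  (norm_sub_le _ _).trans (add_le_add_left (norm_sub_le _ _) _)

lemma norm_two_sub_sub_le {z₁ z₂ : ℂ} (h₁ : ‖z₁‖ ≤ 1) (h₂ : ‖z₂‖ ≤ 1) :
    ‖2 - z₁ - z₂‖ ≤ 4 :=
  calc ‖2 - z₁ - z₂‖ ≤ ‖(2 : ℂ)‖ + ‖z₁‖ + ‖z₂‖ := norm_sub_sub_le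
    _ ≤ 4 := by rw [Complex.norm_two]; linarith

lemma four_mul_sq_le_agler_sum {z₁ z₂ : ℂ} (h₁ : ‖z₁‖ ≤ 1) (h₂ : ‖z₂‖ ≤ 1) :
    4 * ((1 - ‖z₁‖) * (1 - ‖z₂‖)) ^ 2 ≤
      2 * (1 - ‖z₁‖ ^ 2) * ‖1 - z₂‖ ^ 2 + 2 * (1 - ‖z₂‖ ^ 2) * ‖1 - z₁‖ ^ 2 := by
  set a := 1 - ‖z₁‖
  set b := 1 - ‖z₂‖
  have ha : 0 ≤ a := sub_nonneg.2 h₁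
  have hb : 0 ≤ b := sub_nonneg.2 h₂
  have ha' : a ≤ 1 - ‖z₁‖ ^ 2 := by nlinarith [norm_nonneg z₁]
  have hb' : b ≤ 1 - ‖z₂‖ ^ 2 := by nlinarith [norm_nonneg z₂]
  have hab : 2 * a * b ≤ a + b := by
    nlinarith [mul_nonneg ha (norm_nonneg z₂), mul_nonneg hb (norm_nonneg z₁)]
  calc 4 * (a * b) ^ 2 = 2 * a * b * (2 * a * b) := by ring
    _ ≤ 2 * a * b * (a + b) := by gcongr
    _ = 2 * a * b ^ 2 + 2 * b * a ^ 2 := by ring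
    _ ≤ 2 * (1 - ‖z₁‖ ^ 2) * ‖1 - z₂‖ ^ 2 + 2 * (1 - ‖z₂‖ ^ 2) * ‖1 - z₁‖ ^ 2 := by
      have h₁' : 1 - ‖z₁‖ ≤ ‖1 - z₁‖ := by simpa using norm_sub_norm_le 1 z₁
      have h₂' : 1 - ‖z₂‖ ≤ ‖1 - z₂‖ := by simpa using norm_sub_norm_le 1 z₂
      gcongr <;> linarith

lemma sq_sub_sq_div_le_one_sub_div {x y : ℝ} (hy : 0 ≤ y) (hyx : y ≤ x) (hx₄ : x ≤ 4) :
    (x ^ 2 - y ^ 2) / 32 ≤ 1 - y / x := by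
  rcases (hy.trans hyx).eq_or_lt with rfl | hx
  · obtain rfl : y = 0 := le_antisymm hyx hy
    norm_num
  have hxy : x * (x + y) ≤ 32 := by nlinarith
  rw [div_le_iff₀ (by norm_num), one_sub_div hx.ne', div_mul_eq_mul_div, le_div_iff₀ hx]
  nlinarith [mul_le_mul_of_nonneg_left hxy (sub_nonneg.2 hyx)]

/-- estimate in Example 5.1 of the paper. For
`φ = (2z₁z₂ - z₁ - z₂)/(2 - z₁ - z₂)`, every unimodular `ζ` and every `(z₁,z₂) ∈ 𝔻²`,
`|φ(z) - ζ| ≥ (1/8)(1-|z₁|)²(1-|z₂|)²`. -/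
theorem statement15 :
    ∀ ζ : ℂ, ‖ζ‖ = 1 →
      ∀ z₁ z₂ : ℂ, ‖z₁‖ < 1 → ‖z₂‖ < 1 →
        (1 / 8) * (1 - ‖z₁‖) ^ 2 * (1 - ‖z₂‖) ^ 2 ≤
          ‖(2 * z₁ * z₂ - z₁ - z₂) / (2 - z₁ - z₂) - ζ‖ := by
  intro ζ hζ z₁ z₂ h₁ h₂
  have hagler := (four_mul_sq_le_agler_sum h₁.le h₂.le).trans_eq
    (agler_decomposition z₁ z₂).symm
  have hqp : ‖2 * z₁ * z₂ - z₁ - z₂‖ ≤ ‖2 - z₁ - z₂‖ :=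
    (pow_le_pow_iff_left₀ (norm_nonneg _) (norm_nonneg _) two_ne_zero).1
      (sub_nonneg.1 ((by positivity : (0 : ℝ) ≤ _).trans hagler))
  calc (1 / 8) * (1 - ‖z₁‖) ^ 2 * (1 - ‖z₂‖) ^ 2
      = 4 * ((1 - ‖z₁‖) * (1 - ‖z₂‖)) ^ 2 / 32 := by ring
    _ ≤ (‖2 - z₁ - z₂‖ ^ 2 - ‖2 * z₁ * z₂ - z₁ - z₂‖ ^ 2) / 32 := by gcongr
    _ ≤ 1 - ‖2 * z₁ * z₂ - z₁ - z₂‖ / ‖2 - z₁ - z₂‖ :=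
      sq_sub_sq_div_le_one_sub_div (norm_nonneg _) hqp (norm_two_sub_sub_le h₁.le h₂.le)
    _ = ‖ζ‖ - ‖(2 * z₁ * z₂ - z₁ - z₂) / (2 - z₁ - z₂)‖ := by rw [hζ, norm_div]
    _ ≤ ‖(2 * z₁ * z₂ - z₁ - z₂) / (2 - z₁ - z₂) - ζ‖ := by
      rw [norm_sub_rev]; exact norm_sub_norm_le _ _
end

section
/- Let φ(z₁,z₂) = -(2z₁z₂ - z₁ - z₂)/(2 - z₁ - z₂) and Φ = (φ,φ) : 𝔻² → 𝔻². Then the composition operator C_Φ : A²(𝔻²) → A²(𝔻²) is not bounded. -/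
open MeasureTheory Complex Set ENNReal NNReal

noncomputable section

/-- The open unit bidisc `𝔻²`. -/
def biD : Set (ℂ × ℂ) := {z | ‖z.1‖ < 1 ∧ ‖z.2‖ < 1}

/-- The distinguished boundary `𝕋²` (the bitorus). -/
def biT : Set (ℂ × ℂ) := {z | ‖z.1‖ = 1 ∧ ‖z.2‖ = 1}

/-- Normalized area measure on `ℂ²`, i.e. `(1/π²)`·(Lebesgue measure), the product
`dA(z₁)dA(z₂)` of two normalized area measures on the unit disc. -/
def dA2 : Measure (ℂ × ℂ) := (ENNReal.ofReal (Real.pi ^ 2))⁻¹ • volume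

/-- The Bergman weight `(1-|z₁|²)^β (1-|z₂|²)^β`. -/
def w2 (β : ℝ) (z : ℂ × ℂ) : ℝ≥0∞ :=
  ENNReal.ofReal ((1 - ‖z.1‖ ^ 2) ^ β * (1 - ‖z.2‖ ^ 2) ^ β)

/-- The squared weighted Bergman norm `∫_{𝔻²} |g|² (1-|z₁|²)^β (1-|z₂|²)^β dA dA`. -/
def bNorm (β : ℝ) (g : ℂ × ℂ → ℂ) : ℝ≥0∞ :=
  ∫⁻ z in biD, (‖g z‖₊ : ℝ≥0∞) ^ 2 * w2 β z ∂dA2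

/-- Boundedness of the composition operator `C_Φ : A²_α(𝔻²) → A²_β(𝔻²)`. -/
def CompBounded (α β : ℝ) (Φ : ℂ × ℂ → ℂ × ℂ) : Prop :=
  ∃ C : ℝ, 0 < C ∧ ∀ f : ℂ × ℂ → ℂ, DifferentiableOn ℂ f biD →
    bNorm β (fun z => f (Φ z)) ≤ ENNReal.ofReal C * bNorm α f

/-- Evaluation of a two-variable polynomial at a point of `ℂ²`. -/
def ev2 (p : MvPolynomial (Fin 2) ℂ) (z : ℂ × ℂ) : ℂ :=
  MvPolynomial.eval ![z.1, z.2] p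

/-- `pt` is the reflection `p̃(z₁,z₂) = z₁ⁿ z₂ᵐ conj (p (1/conj z₁, 1/conj z₂))` of `p`,
where `(n,m)` is the bidegree of `p`. -/
def IsReflection (p pt : MvPolynomial (Fin 2) ℂ) : Prop :=
  ∀ z : ℂ × ℂ, z.1 ≠ 0 → z.2 ≠ 0 →
    ev2 pt z = z.1 ^ (MvPolynomial.degreeOf 0 p) * z.2 ^ (MvPolynomial.degreeOf 1 p) *
      (starRingEnd ℂ) (ev2 p (((starRingEnd ℂ) z.1)⁻¹, ((starRingEnd ℂ) z.2)⁻¹))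

/-!
The test function `f(z) = (1 - z₁)^{-1/2} (1 - z₂)^{-1/2}` lies in `A²(𝔻²)`, since
`|f|² = |1 - z₁|⁻¹ |1 - z₂|⁻¹` and `|1 - w|⁻¹` is integrable on the disc, its singularity having
order `1 < 2 = dim_ℝ ℂ`. On the other hand `1 - φ = 2 (1 - z₁)(1 - z₂) / (2 - z₁ - z₂)`, so
`|f ∘ Φ|² = |1 - φ|⁻² ≥ |1 - z₂|⁻² / 36` when `|z₁| < 1/2`, and `|1 - w|⁻²` is not integrable on the
disc: in polar coordinates about `1` a sector already contributes `∫₀¹ dr / r = ∞`.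
-/

open Metric

theorem setLIntegral_prod_mul {α β : Type*} [MeasurableSpace α] [MeasurableSpace β]
    {μ : Measure α} {ν : Measure β} [SFinite μ] [SFinite ν] {f : α → ℝ≥0∞} {g : β → ℝ≥0∞}
    {s : Set α} {t : Set β} (hf : AEMeasurable f (μ.restrict s))
    (hg : AEMeasurable g (ν.restrict t)) :
    ∫⁻ z in s ×ˢ t, f z.1 * g z.2 ∂μ.prod ν = (∫⁻ x in s, f x ∂μ) * ∫⁻ y in t, g y ∂ν := by
  rw [← Measure.prod_restrict, lintegral_prod_mul hf hg]

theorem setLIntegral_comp_sub_left_ball {E : Type*} [NormedAddCommGroup E] [MeasurableSpace E]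
    [BorelSpace E] (μ : Measure E) [μ.IsAddLeftInvariant] [μ.IsNegInvariant]
    (F : E → ℝ≥0∞) (a : E) (r : ℝ) :
    ∫⁻ x in ball 0 r, F (a - x) ∂μ = ∫⁻ x in ball a r, F x ∂μ := by
  have hpre : (a - ·) ⁻¹' ball a r = ball 0 r := by
    ext x; simp [dist_eq_norm]
  rw [← hpre]
  exact (Measure.measurePreserving_sub_left μ a).setLIntegral_comp_preimage_emb
    (MeasurableEquiv.subLeft a).measurableEmbedding F _

theorem lintegral_Ioo_zero_inv_eq_top {t : ℝ} (ht : 0 < t) :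
    ∫⁻ x in Ioo 0 t, ENNReal.ofReal x⁻¹ = ∞ := by
  by_contra h
  have hint := (lintegral_ofReal_ne_top_iff_integrable
    measurable_inv.aestronglyMeasurable
    ((ae_restrict_mem measurableSet_Ioo).mono fun x hx => inv_nonneg.2 hx.1.le)).1 h
  have : IntegrableOn (fun x : ℝ => x ^ (-1 : ℝ)) (Ioo 0 t) :=
    IntegrableOn.congr_fun hint (fun x _ => (Real.rpow_neg_one x).symm) measurableSet_Ioo
  exact absurd ((intervalIntegral.integrableOn_Ioo_rpow_iff ht).1 this) (lt_irrefl _)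

theorem lintegral_ball_inv_norm_sub_lt_top {E : Type*} [NormedAddCommGroup E] [NormedSpace ℝ E]
    [FiniteDimensional ℝ E] [MeasurableSpace E] [BorelSpace E] (μ : Measure E)
    [μ.IsAddHaarMeasure] (hd : 2 ≤ Module.finrank ℝ E) (a : E) (r : ℝ) :
    ∫⁻ x in ball 0 r, ENNReal.ofReal ‖a - x‖⁻¹ ∂μ < ∞ := by
  rw [setLIntegral_comp_sub_left_ball μ (fun x => ENNReal.ofReal ‖x‖⁻¹)]
  have hint : IntegrableOn (fun x : E => ‖x‖⁻¹) (ball 0 (‖a‖ + r)) μ := by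
    refine integrableOn_ball_of_norm_le_rpow (C := 1) (α := 1) (by omega) (by exact_mod_cast hd)
      (ae_of_all _ fun x => ?_) (by fun_prop)
    simp [Real.rpow_neg_one]
  refine lt_of_le_of_lt (lintegral_mono_set ?_) hint.lintegral_lt_top
  intro x hx
  simp only [mem_ball, dist_zero_right] at hx ⊢
  calc ‖x‖ ≤ ‖a‖ + ‖x - a‖ := by simpa using norm_add_le a (x - a)
    _ < ‖a‖ + r := by rw [← dist_eq_norm]; linarith

theorem polarCoord_symm_mem_ball_one {p : ℝ × ℝ} (hr : p.1 ∈ Ioo 0 1) (hθ : p.2 ∈ Ioo (-1) 1) :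
    Complex.polarCoord.symm p ∈ ball (1 : ℂ) 1 := by
  have hcos : 1 / 2 < Real.cos p.2 := by
    have := Real.one_sub_sq_div_two_le_cos (x := p.2)
    nlinarith [abs_lt.2 hθ, sq_abs p.2, abs_nonneg p.2]
  rw [mem_ball, dist_eq_norm, ← sq_lt_one_iff₀ (norm_nonneg _), Complex.sq_norm,
    Complex.normSq_apply]
  simp only [Complex.polarCoord_symm_apply, sub_re, sub_im, mul_re, mul_im, ofReal_re, ofReal_im,
    add_re, add_im, I_re, I_im, one_re, one_im]
  nlinarith [congrArg (p.1 ^ 2 * ·) (Real.sin_sq_add_cos_sq p.2),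
    mul_pos hr.1 (show 0 < 2 * Real.cos p.2 - p.1 by linarith [hr.2])]

theorem lintegral_ball_inv_norm_one_sub_sq_eq_top :
    ∫⁻ w in ball (0 : ℂ) 1, ENNReal.ofReal (‖1 - w‖ ^ 2)⁻¹ = ∞ := by
  rw [setLIntegral_comp_sub_left_ball volume (fun u => ENNReal.ofReal (‖u‖ ^ 2)⁻¹),
    ← lintegral_indicator measurableSet_ball, ← Complex.lintegral_comp_polarCoord_symm]
  -- In polar coordinates `‖u‖⁻² du = r⁻¹ dr dθ`, and the sector `|θ| < 1` lies in `ball 1 1`.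
  have hsector : Ioo (0 : ℝ) 1 ×ˢ Ioo (-1 : ℝ) 1 ⊆ _root_.polarCoord.target := by
    rintro p ⟨hr, hθ⟩
    exact ⟨hr.1, by linarith [Real.pi_gt_three, hθ.1], by linarith [Real.pi_gt_three, hθ.2]⟩
  refine top_unique (le_trans ?_ (lintegral_mono_set hsector))
  calc ∞ = ∫⁻ p in Ioo (0 : ℝ) 1 ×ˢ Ioo (-1 : ℝ) 1, ENNReal.ofReal p.1⁻¹ * 1 := by
        rw [Measure.volume_eq_prod, setLIntegral_prod_mul (f := fun x => ENNReal.ofReal x⁻¹)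
          (g := fun _ => 1) (by fun_prop) aemeasurable_const, lintegral_Ioo_zero_inv_eq_top one_pos]
        simp
    _ ≤ _ := by
        refine setLIntegral_mono' (measurableSet_Ioo.prod measurableSet_Ioo) fun p ⟨hr, hθ⟩ => ?_
        rw [smul_eq_mul, indicator_of_mem (polarCoord_symm_mem_ball_one hr hθ),
          Complex.norm_polarCoord_symm, abs_of_pos hr.1, ← ENNReal.ofReal_mul hr.1.le, mul_one,
          sq, mul_inv, ← mul_assoc, mul_inv_cancel₀ hr.1.ne', one_mul]

theorem one_sub_mem_slitPlane {w : ℂ} (hw : ‖w‖ < 1) : 1 - w ∈ slitPlane :=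
  Or.inl (by simpa using (re_le_norm w).trans_lt hw)

theorem sq_norm_cpow_neg_half (u : ℂ) : ‖u ^ ((-(1 / 2) : ℝ) : ℂ)‖ ^ 2 = ‖u‖⁻¹ := by
  rw [norm_cpow_real, ← Real.rpow_natCast, ← Real.rpow_mul (norm_nonneg u)]
  norm_num [Real.rpow_neg_one]

def testFun (z : ℂ × ℂ) : ℂ :=
  (1 - z.1) ^ ((-(1 / 2) : ℝ) : ℂ) * (1 - z.2) ^ ((-(1 / 2) : ℝ) : ℂ)

theorem differentiableOn_testFun : DifferentiableOn ℂ testFun biD := fun _ hz =>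
  (((differentiableAt_const 1).sub differentiableAt_fst).cpow (differentiableAt_const _)
    (one_sub_mem_slitPlane hz.1)).mul
  (((differentiableAt_const 1).sub differentiableAt_snd).cpow (differentiableAt_const _)
    (one_sub_mem_slitPlane hz.2)) |>.differentiableWithinAt

theorem sq_norm_testFun (z : ℂ × ℂ) : ‖testFun z‖ ^ 2 = ‖1 - z.1‖⁻¹ * ‖1 - z.2‖⁻¹ := by
  rw [testFun, norm_mul, mul_pow, sq_norm_cpow_neg_half, sq_norm_cpow_neg_half]

theorem sq_norm_testFun_diag (w : ℂ) : ‖testFun (w, w)‖ ^ 2 = (‖1 - w‖ ^ 2)⁻¹ := by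
  rw [sq_norm_testFun, sq, mul_inv]

theorem biD_eq : biD = ball 0 1 ×ˢ ball 0 1 := by
  ext; simp [biD]

theorem bNorm_zero_eq (g : ℂ × ℂ → ℂ) :
    bNorm 0 g = (ENNReal.ofReal (Real.pi ^ 2))⁻¹ * ∫⁻ z in biD, ENNReal.ofReal (‖g z‖ ^ 2) := by
  simp only [bNorm, w2, Real.rpow_zero, mul_one, ENNReal.ofReal_one, dA2,
    Measure.restrict_smul, lintegral_smul_measure, smul_eq_mul]
  congr 2 with z
  rw [ENNReal.ofReal_pow (norm_nonneg _), ofReal_norm, enorm_eq_nnnorm]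

theorem bNorm_zero_testFun_lt_top : bNorm 0 testFun < ∞ := by
  have hball := lintegral_ball_inv_norm_sub_lt_top (volume : Measure ℂ)
    (by rw [Complex.finrank_real_complex]) 1 1
  rw [bNorm_zero_eq, biD_eq, Measure.volume_eq_prod]
  simp_rw [sq_norm_testFun, ENNReal.ofReal_mul (inv_nonneg.2 (norm_nonneg _))]
  rw [setLIntegral_prod_mul (f := fun w => ENNReal.ofReal ‖1 - w‖⁻¹)
    (g := fun w => ENNReal.ofReal ‖1 - w‖⁻¹) (by fun_prop) (by fun_prop)]
  exact ENNReal.mul_lt_top (by simp [Real.pi_pos]) (ENNReal.mul_lt_top hball hball)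

def phi (z : ℂ × ℂ) : ℂ := -((2 * z.1 * z.2 - z.1 - z.2) / (2 - z.1 - z.2))

theorem two_sub_norm_sub_norm_le (z : ℂ × ℂ) : 2 - ‖z.1‖ - ‖z.2‖ ≤ ‖2 - z.1 - z.2‖ := by
  have h := norm_sub_norm_le (2 : ℂ) (z.1 + z.2)
  rw [Complex.norm_two, ← sub_sub] at h
  linarith [norm_add_le z.1 z.2]

theorem two_sub_sub_ne_zero {z : ℂ × ℂ} (hz : z ∈ biD) : 2 - z.1 - z.2 ≠ 0 :=
  norm_pos_iff.1 <| lt_of_lt_of_le (by linarith [hz.1, hz.2]) (two_sub_norm_sub_norm_le z)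

theorem one_sub_phi {z : ℂ × ℂ} (hz : z ∈ biD) :
    1 - phi z = 2 * (1 - z.1) * (1 - z.2) / (2 - z.1 - z.2) := by
  have hden := two_sub_sub_ne_zero hz
  rw [phi]
  field_simp
  ring

theorem norm_one_sub_phi_le {z : ℂ × ℂ} (h1 : ‖z.1‖ < 1 / 2) (h2 : ‖z.2‖ < 1) :
    ‖1 - phi z‖ ≤ 6 * ‖1 - z.2‖ := by
  have hden : 1 / 2 ≤ ‖2 - z.1 - z.2‖ := by linarith [two_sub_norm_sub_norm_le z]
  have hnum : ‖1 - z.1‖ ≤ 3 / 2 := by linarith [norm_sub_le (1 : ℂ) z.1, norm_one (α := ℂ)]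
  rw [one_sub_phi ⟨h1.trans (by norm_num), h2⟩, norm_div, norm_mul, norm_mul, Complex.norm_two,
    div_le_iff₀ (by linarith)]
  nlinarith [norm_nonneg (1 - z.2), norm_nonneg (1 - z.1)]

theorem inv_sq_norm_one_sub_le_sq_norm_testFun_phi {z : ℂ × ℂ} (h1 : ‖z.1‖ < 1 / 2)
    (h2 : ‖z.2‖ < 1) : 36⁻¹ * (‖1 - z.2‖ ^ 2)⁻¹ ≤ ‖testFun (phi z, phi z)‖ ^ 2 := by
  have hz : z ∈ biD := ⟨h1.trans (by norm_num), h2⟩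
  have hpos : 0 < ‖1 - phi z‖ := by
    rw [one_sub_phi hz, norm_pos_iff]
    exact div_ne_zero (mul_ne_zero (mul_ne_zero two_ne_zero
      (slitPlane_ne_zero (one_sub_mem_slitPlane hz.1)))
      (slitPlane_ne_zero (one_sub_mem_slitPlane hz.2))) (two_sub_sub_ne_zero hz)
  rw [sq_norm_testFun_diag, ← mul_inv, show (36 : ℝ) = 6 ^ 2 by norm_num, ← mul_pow]
  exact inv_anti₀ (by positivity) (pow_le_pow_left₀ hpos.le (norm_one_sub_phi_le h1 h2) 2)

theorem bNorm_zero_testFun_comp_phi_eq_top :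
    bNorm 0 (fun z => testFun (phi z, phi z)) = ∞ := by
  rw [bNorm_zero_eq, ENNReal.mul_eq_top]
  refine Or.inl ⟨by simp, top_unique ?_⟩
  have hsub : ball (0 : ℂ) (1 / 2) ×ˢ ball 0 1 ⊆ biD :=
    biD_eq ▸ prod_mono (ball_subset_ball (by norm_num)) le_rfl
  calc ∞ = ∫⁻ z in ball (0 : ℂ) (1 / 2) ×ˢ ball 0 1,
        ENNReal.ofReal 36⁻¹ * ENNReal.ofReal (‖1 - z.2‖ ^ 2)⁻¹ := by
        rw [Measure.volume_eq_prod, setLIntegral_prod_mul (f := fun _ => ENNReal.ofReal 36⁻¹)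
          (g := fun w => ENNReal.ofReal (‖1 - w‖ ^ 2)⁻¹) (by fun_prop) (by fun_prop),
          lintegral_ball_inv_norm_one_sub_sq_eq_top, setLIntegral_const]
        exact (ENNReal.mul_top (mul_ne_zero (by norm_num)
          (measure_ball_pos volume _ (by norm_num)).ne')).symm
    _ ≤ ∫⁻ z in ball (0 : ℂ) (1 / 2) ×ˢ ball 0 1,
          ENNReal.ofReal (‖testFun (phi z, phi z)‖ ^ 2) :=
        setLIntegral_mono' (measurableSet_ball.prod measurableSet_ball) fun z hz => by
          rw [← ENNReal.ofReal_mul (by norm_num)]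
          exact ENNReal.ofReal_le_ofReal (inv_sq_norm_one_sub_le_sq_norm_testFun_phi
            (mem_ball_zero_iff.1 hz.1) (mem_ball_zero_iff.1 hz.2))
    _ ≤ _ := lintegral_mono_set hsub

/-- Example 5.2 of the paper. For
`φ = -(2z₁z₂ - z₁ - z₂)/(2 - z₁ - z₂)` and `Φ = (φ,φ)`, the composition operator
`C_Φ : A²(𝔻²) → A²(𝔻²)` is not bounded. -/
theorem statement16 :
    ¬ CompBounded 0 0
        (fun z : ℂ × ℂ =>
          (-((2 * z.1 * z.2 - z.1 - z.2) / (2 - z.1 - z.2)),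
           -((2 * z.1 * z.2 - z.1 - z.2) / (2 - z.1 - z.2)))) := by
  rintro ⟨C, -, hC⟩
  have h := hC testFun differentiableOn_testFun
  change bNorm 0 (fun z => testFun (phi z, phi z)) ≤ _ at h
  rw [bNorm_zero_testFun_comp_phi_eq_top, top_le_iff] at h
  exact (ENNReal.mul_lt_top ofReal_lt_top bNorm_zero_testFun_lt_top).ne h
end
end

section
/- Let φ(z₁,z₂) = -(2z₁z₂ - z₁ - z₂)/(2 - z₁ - z₂). Then for every (z₁,z₂) in the closed bidisc with (z₁,z₂) ≠ (1,1): |φ(z₁,z₂) - 1| = 2·|1-z₁|·|1-z₂|/|2-z₁-z₂| ≤ 4·|1-z₁|·|1-z₂|/(|1-z₁|² + |1-z₂|²). -/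
/-! Since `φ - 1 = -2(1-z₁)(1-z₂)/(2-z₁-z₂)`, the equality is just multiplicativity of the norm.
For the bound, `|1-z|² = 1 - 2 Re z + |z|² ≤ 2 Re(1-z)` on the closed disc, so
`|2-z₁-z₂| ≥ Re(2-z₁-z₂) ≥ (|1-z₁|² + |1-z₂|²)/2`, which is positive away from `(1,1)`. -/

namespace Complex

theorem norm_one_sub_sq_le_two_mul_re {z : ℂ} (hz : ‖z‖ ≤ 1) :
    ‖1 - z‖ ^ 2 ≤ 2 * (1 - z).re := by
  have hz2 : z.re * z.re + z.im * z.im ≤ 1 := by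
    rw [← normSq_apply, ← Complex.sq_norm]
    nlinarith [norm_nonneg z]
  rw [Complex.sq_norm, normSq_apply]
  simp only [sub_re, sub_im, one_re, one_im]
  nlinarith

theorem norm_one_sub_sq_add_sq_le_two_mul_norm {z₁ z₂ : ℂ} (h₁ : ‖z₁‖ ≤ 1) (h₂ : ‖z₂‖ ≤ 1) :
    ‖1 - z₁‖ ^ 2 + ‖1 - z₂‖ ^ 2 ≤ 2 * ‖2 - z₁ - z₂‖ := by
  have hre : (2 - z₁ - z₂).re = (1 - z₁).re + (1 - z₂).re := by
    simp only [sub_re, re_ofNat, one_re]; ring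
  calc ‖1 - z₁‖ ^ 2 + ‖1 - z₂‖ ^ 2 ≤ 2 * (2 - z₁ - z₂).re := by
        rw [hre]
        linarith [norm_one_sub_sq_le_two_mul_re h₁, norm_one_sub_sq_le_two_mul_re h₂]
    _ ≤ 2 * ‖2 - z₁ - z₂‖ := by gcongr; exact re_le_norm _

theorem norm_one_sub_sq_add_sq_pos {z₁ z₂ : ℂ} (h : (z₁, z₂) ≠ (1, 1)) :
    0 < ‖1 - z₁‖ ^ 2 + ‖1 - z₂‖ ^ 2 := by
  by_contra! hle
  have h₁ : ‖1 - z₁‖ = 0 := by nlinarith [norm_nonneg (1 - z₁), norm_nonneg (1 - z₂)]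
  have h₂ : ‖1 - z₂‖ = 0 := by nlinarith [norm_nonneg (1 - z₁), norm_nonneg (1 - z₂)]
  rw [norm_eq_zero, sub_eq_zero] at h₁ h₂
  exact h (by rw [← h₁, ← h₂])

end Complex

theorem neg_div_sub_one_eq_neg_two_mul_div {K : Type*} [Field K] {z₁ z₂ : K} (h : 2 - z₁ - z₂ ≠ 0) :
    -((2 * z₁ * z₂ - z₁ - z₂) / (2 - z₁ - z₂)) - 1 =
      -(2 * (1 - z₁) * (1 - z₂)) / (2 - z₁ - z₂) := by
  field_simp
  ring

/-- estimate in Example 5.2 of the paper. For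
`φ = -(2z₁z₂ - z₁ - z₂)/(2 - z₁ - z₂)` and `(z₁,z₂)` in the closed bidisc with
`(z₁,z₂) ≠ (1,1)`:
`|φ(z) - 1| = 2|1-z₁||1-z₂|/|2-z₁-z₂| ≤ 4|1-z₁||1-z₂|/(|1-z₁|² + |1-z₂|²)`. -/
theorem statement18 :
    ∀ z₁ z₂ : ℂ, ‖z₁‖ ≤ 1 → ‖z₂‖ ≤ 1 → (z₁, z₂) ≠ ((1 : ℂ), (1 : ℂ)) →
      ‖-((2 * z₁ * z₂ - z₁ - z₂) / (2 - z₁ - z₂)) - 1‖ =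
          2 * ‖1 - z₁‖ * ‖1 - z₂‖ / ‖2 - z₁ - z₂‖ ∧
        ‖-((2 * z₁ * z₂ - z₁ - z₂) / (2 - z₁ - z₂)) - 1‖ ≤
          4 * ‖1 - z₁‖ * ‖1 - z₂‖ /
            (‖1 - z₁‖ ^ 2 + ‖1 - z₂‖ ^ 2) := by
  intro z₁ z₂ h₁ h₂ hne
  have hpos := Complex.norm_one_sub_sq_add_sq_pos hne
  have hle := Complex.norm_one_sub_sq_add_sq_le_two_mul_norm h₁ h₂
  have hden : 2 - z₁ - z₂ ≠ 0 := by
    rw [← norm_pos_iff]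
    linarith
  have heq : ‖-((2 * z₁ * z₂ - z₁ - z₂) / (2 - z₁ - z₂)) - 1‖ =
      2 * ‖1 - z₁‖ * ‖1 - z₂‖ / ‖2 - z₁ - z₂‖ := by
    rw [neg_div_sub_one_eq_neg_two_mul_div hden, norm_div, norm_neg, norm_mul, norm_mul,
      Complex.norm_two]
  refine ⟨heq, ?_⟩
  calc ‖-((2 * z₁ * z₂ - z₁ - z₂) / (2 - z₁ - z₂)) - 1‖
      = 4 * ‖1 - z₁‖ * ‖1 - z₂‖ / (2 * ‖2 - z₁ - z₂‖) := by
        rw [heq]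
        field_simp
        ring
    _ ≤ 4 * ‖1 - z₁‖ * ‖1 - z₂‖ / (‖1 - z₁‖ ^ 2 + ‖1 - z₂‖ ^ 2) := by
        gcongr
end
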